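/- arXiv:2412.19879 — 4 statements merged into one kernel-verified Lean document; each statement's English description precedes it below -/
import Mathlib

section
/- Let a < b be reals, let p, w : (a,b) → ℝ be twice continuously differentiable and strictly positive, let q : (a,b) → ℝ be continuous, and let λ ∈ ℝ. Suppose u : (a,b) → ℝ is twice differentiable and satisfies the Sturm–Liouville equation −(p(x)u′(x))′ + q(x)u(x) = λ w(x) u(x) on (a,b). Fix x₀ ∈ (a,b) and define s : (a,b) → ℝ by s(x) = ∫_{x₀}^{x} √(w(r)/p(r)) dr; then s is strictly increasing with a twice differentiable inverse X. Define m(s) = (p(X(s)) w(X(s)))^{−1/4} and y(s) = u(X(s))/m(s). Then y″(s) = (V(s) − λ) y(s) on the image of s, where V(s) = q(X(s))/w(X(s)) + m(s)·(d²/ds²)(1/m(s)). -/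
open Set Filter MeasureTheory intervalIntegral
open scoped Topology

/-- **Liouville transformation of a Sturm–Liouville problem to Schrödinger form.**
Let `a < b`, let `p, w` be twice continuously differentiable and strictly positive on `(a,b)`,
let `q` be continuous on `(a,b)`, and let `u` be twice differentiable and satisfy
`−(p u′)′ + q u = λ w u` on `(a,b)`.  With `s(x) = ∫_{x₀}^x √(w(r)/p(r)) dr`, the function
`s` is strictly increasing on `(a,b)` and has a twice differentiable inverse `X` on the image;
setting `m(σ) = (p(X(σ)) w(X(σ)))^{−1/4}` and `y(σ) = u(X(σ))/m(σ)`, one has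
`y″(σ) = (V(σ) − λ) y(σ)` on the image of `s`, where
`V(σ) = q(X(σ))/w(X(σ)) + m(σ)·(1/m)″(σ)`. -/
theorem sturm_liouville_to_schrodinger
    (a b : ℝ) (hab : a < b) (p w q u : ℝ → ℝ) (lam : ℝ)
    (hp : ContDiffOn ℝ 2 p (Ioo a b)) (hw : ContDiffOn ℝ 2 w (Ioo a b))
    (hppos : ∀ x ∈ Ioo a b, 0 < p x) (hwpos : ∀ x ∈ Ioo a b, 0 < w x)
    (hq : ContinuousOn q (Ioo a b))
    (hu : ∀ x ∈ Ioo a b, DifferentiableAt ℝ u x)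
    (hu' : ∀ x ∈ Ioo a b, DifferentiableAt ℝ (deriv u) x)
    (hSL : ∀ x ∈ Ioo a b,
      -(deriv (fun t => p t * deriv u t) x) + q x * u x = lam * w x * u x)
    (x₀ : ℝ) (hx₀ : x₀ ∈ Ioo a b)
    (s : ℝ → ℝ)
    (hs : ∀ x ∈ Ioo a b, s x = ∫ r in x₀..x, Real.sqrt (w r / p r)) :
    StrictMonoOn s (Ioo a b) ∧
    ∃ X : ℝ → ℝ,
      (∀ x ∈ Ioo a b, X (s x) = x) ∧
      (∀ σ ∈ s '' Ioo a b, DifferentiableAt ℝ X σ ∧ DifferentiableAt ℝ (deriv X) σ) ∧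
      (∀ σ ∈ s '' Ioo a b,
        deriv (deriv (fun t => u (X t) / (p (X t) * w (X t)) ^ (-(1 : ℝ) / 4))) σ =
          ((q (X σ) / w (X σ) +
              (p (X σ) * w (X σ)) ^ (-(1 : ℝ) / 4) *
                deriv (deriv (fun t => 1 / (p (X t) * w (X t)) ^ (-(1 : ℝ) / 4))) σ) - lam) *
            (u (X σ) / (p (X σ) * w (X σ)) ^ (-(1 : ℝ) / 4))) := by
  have hIopen : IsOpen (Ioo a b) := isOpen_Ioo
  have hpdiff : ∀ x ∈ Ioo a b, DifferentiableAt ℝ p x := fun x hx =>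
    (hp.differentiableOn (by norm_num)).differentiableAt (hIopen.mem_nhds hx)
  have hwdiff : ∀ x ∈ Ioo a b, DifferentiableAt ℝ w x := fun x hx =>
    (hw.differentiableOn (by norm_num)).differentiableAt (hIopen.mem_nhds hx)
  have hdp : ∀ t ∈ Ioo a b, DifferentiableAt ℝ (deriv p) t := by
    intro t ht
    have h3 := ((contDiffOn_succ_iff_deriv_of_isOpen hIopen).1
      (by exact_mod_cast hp : ContDiffOn ℝ (1 + 1) p (Ioo a b))).2.2
    exact (h3.differentiableOn one_ne_zero).differentiableAt (hIopen.mem_nhds ht)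
  have hdw : ∀ t ∈ Ioo a b, DifferentiableAt ℝ (deriv w) t := by
    intro t ht
    have h3 := ((contDiffOn_succ_iff_deriv_of_isOpen hIopen).1
      (by exact_mod_cast hw : ContDiffOn ℝ (1 + 1) w (Ioo a b))).2.2
    exact (h3.differentiableOn one_ne_zero).differentiableAt (hIopen.mem_nhds ht)
  have hgpos : ∀ x ∈ Ioo a b, 0 < Real.sqrt (w x / p x) := fun x hx =>
    Real.sqrt_pos.2 (div_pos (hwpos x hx) (hppos x hx))
  have hgcont : ∀ x ∈ Ioo a b, ContinuousAt (fun r => Real.sqrt (w r / p r)) x := by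
    intro x hx
    exact (Real.continuous_sqrt.continuousAt).comp
      (((hwdiff x hx).continuousAt).div ((hpdiff x hx).continuousAt) (ne_of_gt (hppos x hx)))
  have hsderiv : ∀ x ∈ Ioo a b, HasStrictDerivAt s (Real.sqrt (w x / p x)) x := by
    intro x hx
    have hsub : uIcc x₀ x ⊆ Ioo a b := (ordConnected_Ioo).uIcc_subset hx₀ hx
    have hcOn : ContinuousOn (fun r => Real.sqrt (w r / p r)) (uIcc x₀ x) :=
      fun t ht => (hgcont t (hsub ht)).continuousWithinAt
    have hint : IntervalIntegrable (fun r => Real.sqrt (w r / p r)) volume x₀ x :=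
      hcOn.intervalIntegrable
    have hmeas : StronglyMeasurableAtFilter (fun r => Real.sqrt (w r / p r)) (𝓝 x) :=
      ContinuousAt.stronglyMeasurableAtFilter hIopen hgcont x hx
    have H := intervalIntegral.integral_hasStrictDerivAt_right hint hmeas (hgcont x hx)
    refine H.congr_of_eventuallyEq ?_
    filter_upwards [hIopen.mem_nhds hx] with y hy
    exact (hs y hy).symm
  have hmono : StrictMonoOn s (Ioo a b) := by
    refine strictMonoOn_of_deriv_pos (convex_Ioo a b)
      (fun x hx => ((hsderiv x hx).hasDerivAt.continuousAt).continuousWithinAt) ?_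
    intro x hx
    rw [interior_Ioo] at hx
    rw [(hsderiv x hx).hasDerivAt.deriv]
    exact hgpos x hx
  set X := Function.invFunOn s (Ioo a b) with hXdef
  have hXs : ∀ x ∈ Ioo a b, X (s x) = x := fun x hx => hmono.injOn.leftInvOn_invFunOn hx
  have key : ∀ σ ∈ s '' Ioo a b, X σ ∈ Ioo a b ∧ s (X σ) = σ ∧
      HasStrictDerivAt X (Real.sqrt (p (X σ) / w (X σ))) σ ∧ (s '' Ioo a b) ∈ 𝓝 σ := by
    rintro σ ⟨x, hx, rfl⟩
    have hx' : X (s x) = x := hXs x hx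
    have hS := hsderiv x hx
    have hg0 : Real.sqrt (w x / p x) ≠ 0 := ne_of_gt (hgpos x hx)
    have hleft : ∀ᶠ t in 𝓝 x, X (s t) = t := by
      filter_upwards [hIopen.mem_nhds hx] with t ht; exact hXs t ht
    have hXd : HasStrictDerivAt X (Real.sqrt (w x / p x))⁻¹ (s x) :=
      hS.to_local_left_inverse hg0 hleft
    have hinv : (Real.sqrt (w x / p x))⁻¹ = Real.sqrt (p x / w x) := by
      rw [← Real.sqrt_inv, inv_div]
    have hmem : s '' Ioo a b ∈ 𝓝 (s x) := by
      rw [← hS.map_nhds_eq hg0]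
      exact image_mem_map (hIopen.mem_nhds hx)
    rw [hx']
    exact ⟨hx, rfl, hinv ▸ hXd, hmem⟩
  refine ⟨hmono, X, hXs, ?_, ?_⟩
  · rintro σ hσ
    obtain ⟨hxI, -, hXsd, himg⟩ := key σ hσ
    refine ⟨hXsd.hasDerivAt.differentiableAt, ?_⟩
    have hevd : deriv X =ᶠ[𝓝 σ] fun y => Real.sqrt (p (X y) / w (X y)) := by
      filter_upwards [himg] with y hy
      exact ((key y hy).2.2.1).hasDerivAt.deriv
    refine (Filter.EventuallyEq.differentiableAt_iff hevd).2 ?_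
    exact ((((hpdiff _ hxI).comp σ hXsd.hasDerivAt.differentiableAt).div
      ((hwdiff _ hxI).comp σ hXsd.hasDerivAt.differentiableAt)
      (ne_of_gt (hwpos _ hxI))).sqrt
      (ne_of_gt (div_pos (hppos _ hxI) (hwpos _ hxI))))
  -- Main computation
  have hpw : ∀ t ∈ Ioo a b, 0 < p t * w t := fun t ht => mul_pos (hppos t ht) (hwpos t ht)
  have hhder : ∀ t ∈ Ioo a b, HasDerivAt (fun r => (p r * w r) ^ ((1:ℝ)/4))
      ((deriv p t * w t + p t * deriv w t) * ((1:ℝ)/4) * (p t * w t) ^ ((1:ℝ)/4 - 1)) t := by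
    intro t ht
    exact ((hpdiff t ht).hasDerivAt.mul (hwdiff t ht).hasDerivAt).rpow_const
      (Or.inl (ne_of_gt (hpw t ht)))
  have hhh : ∀ t ∈ Ioo a b,
      (p t * w t) ^ ((1:ℝ)/4) * (p t * w t) ^ ((1:ℝ)/4) = Real.sqrt (p t * w t) := by
    intro t ht
    rw [← Real.rpow_add (hpw t ht), Real.sqrt_eq_rpow]
    norm_num
  have hfhh : ∀ t ∈ Ioo a b, Real.sqrt (p t / w t) *
      ((p t * w t) ^ ((1:ℝ)/4) * (p t * w t) ^ ((1:ℝ)/4)) = p t := by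
    intro t ht
    rw [hhh t ht, ← Real.sqrt_mul (div_nonneg (hppos t ht).le (hwpos t ht).le),
      show p t / w t * (p t * w t) = p t ^ 2 * (w t / w t) by ring,
      div_self (ne_of_gt (hwpos t ht)), mul_one, Real.sqrt_sq (hppos t ht).le]
  have hfw : ∀ t ∈ Ioo a b, Real.sqrt (p t / w t) * w t =
      (p t * w t) ^ ((1:ℝ)/4) * (p t * w t) ^ ((1:ℝ)/4) := by
    intro t ht
    rw [hhh t ht]
    calc Real.sqrt (p t / w t) * w t
        = Real.sqrt (p t / w t) * Real.sqrt (w t * w t) := by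
          rw [Real.sqrt_mul_self (hwpos t ht).le]
      _ = Real.sqrt (p t / w t * (w t * w t)) :=
          (Real.sqrt_mul (div_nonneg (hppos t ht).le (hwpos t ht).le) _).symm
      _ = Real.sqrt (p t * w t) := by
          congr 1
          field_simp [ne_of_gt (hwpos t ht)]
  have hff : ∀ t ∈ Ioo a b, Real.sqrt (p t / w t) * Real.sqrt (p t / w t) = p t / w t :=
    fun t ht => Real.mul_self_sqrt (div_nonneg (hppos t ht).le (hwpos t ht).le)
  rintro σ hσ
  obtain ⟨hxI, -, hXsd, himg⟩ := key σ hσ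
  have hXd : HasDerivAt X (Real.sqrt (p (X σ) / w (X σ))) σ := hXsd.hasDerivAt
  have hev : ∀ᶠ y in 𝓝 σ, X y ∈ Ioo a b ∧
      HasDerivAt X (Real.sqrt (p (X y) / w (X y))) y := by
    filter_upwards [himg] with y hy
    exact ⟨(key y hy).1, ((key y hy).2.2.1).hasDerivAt⟩
  -- derivative of y ↦ u (X y) * h (X y)
  have hAev : ∀ᶠ y in 𝓝 σ, HasDerivAt (fun t => u (X t) * (p (X t) * w (X t)) ^ ((1:ℝ)/4))
      (deriv u (X y) * (Real.sqrt (p (X y) / w (X y)) * (p (X y) * w (X y)) ^ ((1:ℝ)/4)) +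
        u (X y) * (((deriv p (X y) * w (X y) + p (X y) * deriv w (X y)) * ((1:ℝ)/4) *
          (p (X y) * w (X y)) ^ ((1:ℝ)/4 - 1)) * Real.sqrt (p (X y) / w (X y)))) y := by
    filter_upwards [hev] with y hy
    obtain ⟨hyI, hyX⟩ := hy
    have h1 : HasDerivAt (fun t => u (X t)) (deriv u (X y) * Real.sqrt (p (X y) / w (X y))) y := by
      simpa [Function.comp_def] using ((hu (X y) hyI).hasDerivAt).comp y hyX
    have h2 : HasDerivAt (fun t => (p (X t) * w (X t)) ^ ((1:ℝ)/4))
        (((deriv p (X y) * w (X y) + p (X y) * deriv w (X y)) * ((1:ℝ)/4) *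
          (p (X y) * w (X y)) ^ ((1:ℝ)/4 - 1)) * Real.sqrt (p (X y) / w (X y))) y := by
      simpa [Function.comp_def] using (hhder (X y) hyI).comp y hyX
    have h3 := h1.mul h2
    exact h3.congr_deriv (by ring)
  have hHev : ∀ᶠ y in 𝓝 σ, HasDerivAt (fun t => (p (X t) * w (X t)) ^ ((1:ℝ)/4))
      ((((deriv p (X y) * w (X y) + p (X y) * deriv w (X y)) * ((1:ℝ)/4) *
          (p (X y) * w (X y)) ^ ((1:ℝ)/4 - 1)) * Real.sqrt (p (X y) / w (X y)))) y := by
    filter_upwards [hev] with y hy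
    obtain ⟨hyI, hyX⟩ := hy
    simpa [Function.comp_def] using (hhder (X y) hyI).comp y hyX
  -- scalar abbreviations at x := X σ
  have hfdiffx : DifferentiableAt ℝ (fun t => Real.sqrt (p t / w t)) (X σ) :=
    (((hpdiff _ hxI).div (hwdiff _ hxI) (ne_of_gt (hwpos _ hxI))).sqrt
      (ne_of_gt (div_pos (hppos _ hxI) (hwpos _ hxI))))
  have hhdiffx : DifferentiableAt ℝ (fun t => (p t * w t) ^ ((1:ℝ)/4)) (X σ) :=
    (hhder _ hxI).differentiableAt
  have hhddiffx : DifferentiableAt ℝ (fun t => (deriv p t * w t + p t * deriv w t) * ((1:ℝ)/4) *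
      (p t * w t) ^ ((1:ℝ)/4 - 1)) (X σ) := by
    refine DifferentiableAt.mul ?_ ?_
    · exact (((hdp _ hxI).mul (hwdiff _ hxI)).add ((hpdiff _ hxI).mul (hdw _ hxI))).mul
        (differentiableAt_const _)
    · exact ((hpdiff _ hxI).mul (hwdiff _ hxI)).rpow_const (Or.inl (ne_of_gt (hpw _ hxI)))
  have hKd : HasDerivAt (fun t => Real.sqrt (p t / w t) * (p t * w t) ^ ((1:ℝ)/4))
      (deriv (fun t => Real.sqrt (p t / w t) * (p t * w t) ^ ((1:ℝ)/4)) (X σ)) (X σ) :=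
    (hfdiffx.mul hhdiffx).hasDerivAt
  have hLd : HasDerivAt (fun t => ((deriv p t * w t + p t * deriv w t) * ((1:ℝ)/4) *
        (p t * w t) ^ ((1:ℝ)/4 - 1)) * Real.sqrt (p t / w t))
      (deriv (fun t => ((deriv p t * w t + p t * deriv w t) * ((1:ℝ)/4) *
        (p t * w t) ^ ((1:ℝ)/4 - 1)) * Real.sqrt (p t / w t)) (X σ)) (X σ) :=
    (hhddiffx.mul hfdiffx).hasDerivAt
  set F := Real.sqrt (p (X σ) / w (X σ)) with hFdef
  set Hh := (p (X σ) * w (X σ)) ^ ((1:ℝ)/4) with hHdef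
  set Hd := (deriv p (X σ) * w (X σ) + p (X σ) * deriv w (X σ)) * ((1:ℝ)/4) *
      (p (X σ) * w (X σ)) ^ ((1:ℝ)/4 - 1) with hHddef
  set K := deriv (fun t => Real.sqrt (p t / w t) * (p t * w t) ^ ((1:ℝ)/4)) (X σ) with hKdef
  set L := deriv (fun t => ((deriv p t * w t + p t * deriv w t) * ((1:ℝ)/4) *
        (p t * w t) ^ ((1:ℝ)/4 - 1)) * Real.sqrt (p t / w t)) (X σ) with hLdef
  -- second derivative of the main function
  have hG1 : HasDerivAt (fun t => deriv u t * (Real.sqrt (p t / w t) * (p t * w t) ^ ((1:ℝ)/4)) +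
      u t * (((deriv p t * w t + p t * deriv w t) * ((1:ℝ)/4) *
        (p t * w t) ^ ((1:ℝ)/4 - 1)) * Real.sqrt (p t / w t)))
      ((deriv (deriv u) (X σ) * (F * Hh) + deriv u (X σ) * K) +
        (deriv u (X σ) * (Hd * F) + u (X σ) * L)) (X σ) :=
    ((hu' _ hxI).hasDerivAt.mul hKd).add ((hu _ hxI).hasDerivAt.mul hLd)
  have hPhid : HasDerivAt (fun y => deriv u (X y) * (Real.sqrt (p (X y) / w (X y)) *
      (p (X y) * w (X y)) ^ ((1:ℝ)/4)) + u (X y) * (((deriv p (X y) * w (X y) +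
      p (X y) * deriv w (X y)) * ((1:ℝ)/4) * (p (X y) * w (X y)) ^ ((1:ℝ)/4 - 1)) *
      Real.sqrt (p (X y) / w (X y))))
      (((deriv (deriv u) (X σ) * (F * Hh) + deriv u (X σ) * K) +
        (deriv u (X σ) * (Hd * F) + u (X σ) * L)) * F) σ := by
    simpa [Function.comp_def] using hG1.comp σ hXd
  have hPsid : HasDerivAt (fun y => ((deriv p (X y) * w (X y) + p (X y) * deriv w (X y)) *
      ((1:ℝ)/4) * (p (X y) * w (X y)) ^ ((1:ℝ)/4 - 1)) * Real.sqrt (p (X y) / w (X y)))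
      (L * F) σ := by
    simpa [Function.comp_def] using hLd.comp σ hXd
  have d2A : deriv (deriv (fun t => u (X t) * (p (X t) * w (X t)) ^ ((1:ℝ)/4))) σ =
      ((deriv (deriv u) (X σ) * (F * Hh) + deriv u (X σ) * K) +
        (deriv u (X σ) * (Hd * F) + u (X σ) * L)) * F := by
    have h1 : deriv (fun t => u (X t) * (p (X t) * w (X t)) ^ ((1:ℝ)/4)) =ᶠ[𝓝 σ]
        fun y => deriv u (X y) * (Real.sqrt (p (X y) / w (X y)) *
          (p (X y) * w (X y)) ^ ((1:ℝ)/4)) + u (X y) * (((deriv p (X y) * w (X y) +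
          p (X y) * deriv w (X y)) * ((1:ℝ)/4) * (p (X y) * w (X y)) ^ ((1:ℝ)/4 - 1)) *
          Real.sqrt (p (X y) / w (X y))) := hAev.mono fun y hy => hy.deriv
    rw [h1.deriv_eq]
    exact hPhid.deriv
  have d2H : deriv (deriv (fun t => (p (X t) * w (X t)) ^ ((1:ℝ)/4))) σ = L * F := by
    have h1 : deriv (fun t => (p (X t) * w (X t)) ^ ((1:ℝ)/4)) =ᶠ[𝓝 σ]
        fun y => ((deriv p (X y) * w (X y) + p (X y) * deriv w (X y)) * ((1:ℝ)/4) *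
          (p (X y) * w (X y)) ^ ((1:ℝ)/4 - 1)) * Real.sqrt (p (X y) / w (X y)) :=
      hHev.mono fun y hy => hy.deriv
    rw [h1.deriv_eq]
    exact hPsid.deriv
  -- bridges to the literal statement functions
  have hbr1 : (fun t => u (X t) / (p (X t) * w (X t)) ^ (-(1:ℝ)/4)) =ᶠ[𝓝 σ]
      (fun t => u (X t) * (p (X t) * w (X t)) ^ ((1:ℝ)/4)) := by
    filter_upwards [hev] with y hy
    rw [neg_div, Real.rpow_neg (hpw _ hy.1).le, div_inv_eq_mul]
  have hbr2 : (fun t => 1 / (p (X t) * w (X t)) ^ (-(1:ℝ)/4)) =ᶠ[𝓝 σ]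
      (fun t => (p (X t) * w (X t)) ^ ((1:ℝ)/4)) := by
    filter_upwards [hev] with y hy
    rw [neg_div, Real.rpow_neg (hpw _ hy.1).le, one_div, inv_inv]
  have hrw : (p (X σ) * w (X σ)) ^ (-(1:ℝ)/4) = Hh⁻¹ := by
    rw [neg_div, Real.rpow_neg (hpw _ hxI).le, hHdef]
  rw [(hbr1.deriv).deriv_eq, (hbr2.deriv).deriv_eq, d2A, d2H, hrw, div_inv_eq_mul]
  -- now pure algebra
  have E1 : -(deriv p (X σ) * deriv u (X σ) + p (X σ) * deriv (deriv u) (X σ)) +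
      q (X σ) * u (X σ) = lam * w (X σ) * u (X σ) := by
    have hpu : HasDerivAt (fun t => p t * deriv u t)
        (deriv p (X σ) * deriv u (X σ) + p (X σ) * deriv (deriv u) (X σ)) (X σ) :=
      ((hpdiff _ hxI).hasDerivAt).mul (hu' _ hxI).hasDerivAt
    have := hSL (X σ) hxI
    rwa [hpu.deriv] at this
  have E2 : deriv p (X σ) = K * Hh + F * Hh * Hd := by
    have hfh : HasDerivAt (fun t => (Real.sqrt (p t / w t) * (p t * w t) ^ ((1:ℝ)/4)) *
        (p t * w t) ^ ((1:ℝ)/4)) (K * Hh + (F * Hh) * Hd) (X σ) := hKd.mul (hhder _ hxI)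
    have hpev : p =ᶠ[𝓝 (X σ)] fun t => Real.sqrt (p t / w t) *
        (p t * w t) ^ ((1:ℝ)/4) * (p t * w t) ^ ((1:ℝ)/4) := by
      filter_upwards [hIopen.mem_nhds hxI] with t ht
      rw [mul_assoc]
      exact (hfhh t ht).symm
    have := hfh.congr_of_eventuallyEq hpev
    exact this.deriv.trans (by ring)
  have E3 : F * F = p (X σ) / w (X σ) := hff _ hxI
  have E4 : F * w (X σ) = Hh * Hh := hfw _ hxI
  have hPpos := hppos _ hxI
  have hWpos := hwpos _ hxI
  have hHpos : 0 < Hh := Real.rpow_pos_of_pos (hpw _ hxI) _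
  have hFpos : 0 < F := Real.sqrt_pos.2 (div_pos hPpos hWpos)
  have E3' : F * F * w (X σ) = p (X σ) := by
    rw [E3]
    exact div_mul_cancel₀ _ (ne_of_gt hWpos)
  clear_value F Hh Hd K L
  field_simp
  linear_combination (deriv (deriv u) (X σ) * Hh) * E3' + (-Hh) * E1 +
    (-(deriv u (X σ) * Hh)) * E2 + (deriv u (X σ) * Hd * F + deriv u (X σ) * K) * E4
end

section
/- Let n be an integer and μ, λ real numbers. A twice differentiable function u : (−1,1) → ℝ satisfies (1−x²)u″(x) − 2x u′(x) + [λ − μ/4 − n²/(1−x²)]u(x) = 0 on (−1,1) if and only if the function y : (0,π) → ℝ defined by y(s) = √(sin s) · u(−cos s) satisfies the Schrödinger-form equation y″(s) = (V₀(s) − λ) y(s) on (0,π), where V₀(s) = (1/4)csc²(s)·(μ + 4n² − (μ−1)cos²(s) − 2). -/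
open Set Real

private lemma alg_key (c r σ U U' U'' lamv μv nn : ℝ) (hr : r ≠ 0) (hσ : r ^ 2 = σ)
    (hc : c ^ 2 = 1 - σ ^ 2) :
    ((1/2 * -σ) * r⁻¹ + (1/2 * c) * (-(1 / (2 * r) * c) / r ^ 2)) * U +
        (1/2 * c * r⁻¹) * (U' * σ) +
      ((1 / (2 * r) * c * σ + r * c) * U' + (r * σ) * (U'' * σ)) =
    ((1/4) * (1/σ) ^ 2 * (μv + 4 * nn - (μv - 1) * c ^ 2 - 2) - lamv) * (r * U) +
      r * ((1 - (-c) ^ 2) * U'' - 2 * (-c) * U' + (lamv - μv/4 - nn / (1 - (-c) ^ 2)) * U) := by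
  subst hσ
  have h14 : 1 - (-c) ^ 2 = r ^ 4 := by rw [neg_sq]; nlinarith [hc]
  rw [h14]
  have h2 : r ^ 2 ≠ 0 := pow_ne_zero 2 hr
  field_simp
  ring_nf
  linear_combination (4 * U * (μv - 2)) * hc

/-- A twice differentiable `u : (−1,1) → ℝ` satisfies the associated Legendre-type equation
`(1−x²)u″ − 2x u′ + [λ − μ/4 − n²/(1−x²)] u = 0` on `(−1,1)` if and only if
`y(s) = √(sin s)·u(−cos s)` satisfies the Schrödinger-form equation `y″ = (V₀ − λ)y` on
`(0,π)`, with `V₀(s) = (1/4)csc²(s)(μ + 4n² − (μ−1)cos²(s) − 2)`. -/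
theorem legendre_equation_iff_schrodinger_form
    (n : ℤ) (μ lam : ℝ) (u : ℝ → ℝ)
    (hu : ∀ x ∈ Ioo (-1 : ℝ) 1, DifferentiableAt ℝ u x)
    (hu' : ∀ x ∈ Ioo (-1 : ℝ) 1, DifferentiableAt ℝ (deriv u) x) :
    (∀ x ∈ Ioo (-1 : ℝ) 1,
        (1 - x ^ 2) * deriv (deriv u) x - 2 * x * deriv u x +
          (lam - μ / 4 - (n : ℝ) ^ 2 / (1 - x ^ 2)) * u x = 0) ↔
    (∀ s ∈ Ioo (0 : ℝ) π,
        deriv (deriv (fun t => Real.sqrt (Real.sin t) * u (-Real.cos t))) s =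
          ((1 / 4) * (1 / Real.sin s) ^ 2 *
              (μ + 4 * (n : ℝ) ^ 2 - (μ - 1) * (Real.cos s) ^ 2 - 2) - lam) *
            (Real.sqrt (Real.sin s) * u (-Real.cos s))) := by
  have hx : ∀ s ∈ Ioo (0 : ℝ) π, -Real.cos s ∈ Ioo (-1 : ℝ) 1 := by
    intro s hs
    have h1 : Real.cos s < Real.cos 0 :=
      Real.cos_lt_cos_of_nonneg_of_le_pi le_rfl hs.2.le hs.1
    have h2 : Real.cos π < Real.cos s :=
      Real.cos_lt_cos_of_nonneg_of_le_pi hs.1.le le_rfl hs.2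
    simp only [Real.cos_zero, Real.cos_pi] at h1 h2
    exact ⟨by linarith, by linarith⟩
  set F' : ℝ → ℝ := fun t =>
    1/2 * Real.cos t * (Real.sqrt (Real.sin t))⁻¹ * u (-Real.cos t) +
      Real.sqrt (Real.sin t) * Real.sin t * deriv u (-Real.cos t) with hF'
  have hY' : ∀ s ∈ Ioo (0 : ℝ) π,
      HasDerivAt (fun t => Real.sqrt (Real.sin t) * u (-Real.cos t)) (F' s) s := by
    intro s hs
    have hsin : 0 < Real.sin s := Real.sin_pos_of_pos_of_lt_pi hs.1 hs.2
    have hr : 0 < Real.sqrt (Real.sin s) := Real.sqrt_pos.2 hsin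
    have h1 : HasDerivAt (fun t => Real.sqrt (Real.sin t))
        (1 / (2 * Real.sqrt (Real.sin s)) * Real.cos s) s :=
      (Real.hasDerivAt_sqrt hsin.ne').comp s (Real.hasDerivAt_sin s)
    have h3 : HasDerivAt (fun t => -Real.cos t) (Real.sin s) s := by
      have := (Real.hasDerivAt_cos s).neg; rwa [neg_neg] at this
    have h4 : HasDerivAt (fun t => u (-Real.cos t)) (deriv u (-Real.cos s) * Real.sin s) s :=
      ((hu _ (hx s hs)).hasDerivAt).comp s h3
    have h : HasDerivAt (fun t => Real.sqrt (Real.sin t) * u (-Real.cos t)) _ s := h1.mul h4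
    convert h using 1
    simp only [hF']
    field_simp
  have key : ∀ s ∈ Ioo (0 : ℝ) π,
      deriv (deriv (fun t => Real.sqrt (Real.sin t) * u (-Real.cos t))) s =
        ((1 / 4) * (1 / Real.sin s) ^ 2 *
            (μ + 4 * (n : ℝ) ^ 2 - (μ - 1) * (Real.cos s) ^ 2 - 2) - lam) *
          (Real.sqrt (Real.sin s) * u (-Real.cos s)) +
        Real.sqrt (Real.sin s) *
          ((1 - (-Real.cos s) ^ 2) * deriv (deriv u) (-Real.cos s) -
            2 * (-Real.cos s) * deriv u (-Real.cos s) +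
            (lam - μ / 4 - (n : ℝ) ^ 2 / (1 - (-Real.cos s) ^ 2)) * u (-Real.cos s)) := by
    intro s hs
    have hsin : 0 < Real.sin s := Real.sin_pos_of_pos_of_lt_pi hs.1 hs.2
    have hr : 0 < Real.sqrt (Real.sin s) := Real.sqrt_pos.2 hsin
    have hr2 : Real.sqrt (Real.sin s) ^ 2 = Real.sin s := Real.sq_sqrt hsin.le
    have heq : deriv (fun t => Real.sqrt (Real.sin t) * u (-Real.cos t)) =ᶠ[nhds s] F' := by
      filter_upwards [isOpen_Ioo.mem_nhds hs] with t ht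
      exact (hY' t ht).deriv
    rw [heq.deriv_eq]
    have h3 : HasDerivAt (fun t => -Real.cos t) (Real.sin s) s := by
      have := (Real.hasDerivAt_cos s).neg; rwa [neg_neg] at this
    have h1 : HasDerivAt (fun t => Real.sqrt (Real.sin t))
        (1 / (2 * Real.sqrt (Real.sin s)) * Real.cos s) s :=
      (Real.hasDerivAt_sqrt hsin.ne').comp s (Real.hasDerivAt_sin s)
    have h2 : HasDerivAt (fun t => (Real.sqrt (Real.sin t))⁻¹)
        (-(1 / (2 * Real.sqrt (Real.sin s)) * Real.cos s) / Real.sqrt (Real.sin s) ^ 2) s :=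
      h1.inv hr.ne'
    have h4 : HasDerivAt (fun t => u (-Real.cos t)) (deriv u (-Real.cos s) * Real.sin s) s :=
      ((hu _ (hx s hs)).hasDerivAt).comp s h3
    have h5 : HasDerivAt (fun t => deriv u (-Real.cos t))
        (deriv (deriv u) (-Real.cos s) * Real.sin s) s :=
      by have := ((hu' _ (hx s hs)).hasDerivAt).comp s h3; exact this
    have hA : HasDerivAt
        (fun t => 1/2 * Real.cos t * (Real.sqrt (Real.sin t))⁻¹ * u (-Real.cos t))
        (((1/2 * -Real.sin s) * (Real.sqrt (Real.sin s))⁻¹ +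
            (1/2 * Real.cos s) *
              (-(1 / (2 * Real.sqrt (Real.sin s)) * Real.cos s) / Real.sqrt (Real.sin s) ^ 2)) *
            u (-Real.cos s) +
          (1/2 * Real.cos s * (Real.sqrt (Real.sin s))⁻¹) *
            (deriv u (-Real.cos s) * Real.sin s)) s :=
      (((Real.hasDerivAt_cos s).const_mul (1/2 : ℝ)).mul h2).mul h4
    have hB : HasDerivAt (fun t => Real.sqrt (Real.sin t) * Real.sin t * deriv u (-Real.cos t))
        ((1 / (2 * Real.sqrt (Real.sin s)) * Real.cos s * Real.sin s +
            Real.sqrt (Real.sin s) * Real.cos s) * deriv u (-Real.cos s) +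
          (Real.sqrt (Real.sin s) * Real.sin s) *
            (deriv (deriv u) (-Real.cos s) * Real.sin s)) s :=
      (h1.mul (Real.hasDerivAt_sin s)).mul h5
    have hD : deriv F' s = _ := (hA.add hB).deriv
    simp only [hF'] at hD ⊢
    rw [hD]
    have hc : Real.cos s ^ 2 = 1 - Real.sin s ^ 2 := by
      nlinarith [Real.sin_sq_add_cos_sq s]
    linear_combination alg_key (Real.cos s) (Real.sqrt (Real.sin s)) (Real.sin s)
      (u (-Real.cos s)) (deriv u (-Real.cos s)) (deriv (deriv u) (-Real.cos s))
      lam μ ((n : ℝ) ^ 2) hr.ne' hr2 hc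
  constructor
  · intro h s hs
    have hk := key s hs
    rw [h _ (hx s hs)] at hk
    simpa using hk
  · intro h x hxm
    set s := Real.arccos (-x) with hsdef
    have hm1 : (-1 : ℝ) < -x := by linarith [hxm.2]
    have hlt1 : -x < 1 := by linarith [hxm.1]
    have hs1 : 0 < s := Real.arccos_pos.2 hlt1
    have hs2 : s < π := by
      rcases lt_or_eq_of_le (Real.arccos_le_pi (-x)) with h' | h'
      · exact h'
      · exact absurd (Real.arccos_eq_pi.1 h') (by linarith)
    have hcos : Real.cos s = -x := Real.cos_arccos hm1.le hlt1.le
    have hmem : s ∈ Ioo (0 : ℝ) π := ⟨hs1, hs2⟩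
    have hk := key s hmem
    rw [h s hmem] at hk
    have hsin : 0 < Real.sin s := Real.sin_pos_of_pos_of_lt_pi hs1 hs2
    have hr : Real.sqrt (Real.sin s) ≠ 0 := (Real.sqrt_pos.2 hsin).ne'
    have hz : Real.sqrt (Real.sin s) *
        ((1 - (-Real.cos s) ^ 2) * deriv (deriv u) (-Real.cos s) -
          2 * (-Real.cos s) * deriv u (-Real.cos s) +
          (lam - μ / 4 - (n : ℝ) ^ 2 / (1 - (-Real.cos s) ^ 2)) * u (-Real.cos s)) = 0 := by
      linarith
    rw [hcos, neg_neg] at hz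
    rcases mul_eq_zero.1 hz with h' | h'
    · exact absurd h' hr
    · exact h'
end

section
/- For all integers ℓ, n with 1 ≤ n ≤ ℓ, the integral ∫₀^π cos(2s) csc²(s) [y_{ℓ,n}(s)]² ds converges and equals (2ℓ + 1 − 4n)/(2n). -/
open Set Real

/-- The Legendre polynomial `P_ℓ(x) = (1/(2^ℓ ℓ!)) (d/dx)^ℓ (x²−1)^ℓ`. -/
noncomputable def legendreP (l : ℕ) (x : ℝ) : ℝ :=
  (1 / ((2 : ℝ) ^ l * (Nat.factorial l : ℝ))) * iteratedDeriv l (fun t => (t ^ 2 - 1) ^ l) x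

/-- The associated Legendre function `P_ℓⁿ(x) = (1−x²)^{n/2} (d/dx)ⁿ P_ℓ(x)` for `0 ≤ n ≤ ℓ`. -/
noncomputable def assocLegendreP (l n : ℕ) (x : ℝ) : ℝ :=
  (1 - x ^ 2) ^ ((n : ℝ) / 2) * iteratedDeriv n (legendreP l) x

/-- The normalized eigenfunction
`y_{ℓ,n}(s) = √((1+2ℓ)(ℓ−n)!/(2(ℓ+n)!)) · √(sin s) · P_ℓⁿ(cos s)`. -/
noncomputable def pageY (l n : ℕ) (s : ℝ) : ℝ :=
  Real.sqrt ((1 + 2 * (l : ℝ)) * (Nat.factorial (l - n) : ℝ) / (2 * (Nat.factorial (l + n) : ℝ))) *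
    (Real.sqrt (Real.sin s) * assocLegendreP l n (Real.cos s))

namespace PageAux
open Polynomial

noncomputable def fP (l : ℕ) : ℝ[X] := (X^2 - 1)^l

noncomputable def Pl (l : ℕ) : ℝ[X] :=
  C (1/((2:ℝ)^l * (Nat.factorial l : ℝ))) * derivative^[l] (fP l)

noncomputable def u (l n : ℕ) : ℝ[X] := derivative^[n] (Pl l)

lemma iteratedDeriv_eval (n : ℕ) (p : ℝ[X]) (x : ℝ) :
    iteratedDeriv n (fun t => p.eval t) x = (derivative^[n] p).eval x := by
  induction n generalizing x with
  | zero => simp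
  | succ k ih =>
    rw [iteratedDeriv_succ, Function.iterate_succ_apply']
    have : iteratedDeriv k (fun t => p.eval t) = fun t => (derivative^[k] p).eval t :=
      funext fun t => ih t
    rw [this, Polynomial.deriv]

lemma legendreP_eval (l : ℕ) (x : ℝ) : legendreP l x = (Pl l).eval x := by
  have h : (fun t : ℝ => (t ^ 2 - 1) ^ l) = fun t => ((X^2 - 1 : ℝ[X])^l).eval t := by
    funext t; simp
  rw [legendreP, Pl, fP, h, iteratedDeriv_eval]
  simp

lemma iteratedDeriv_legendreP_eval (l n : ℕ) (x : ℝ) :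
    iteratedDeriv n (legendreP l) x = (u l n).eval x := by
  have h : legendreP l = fun t => (Pl l).eval t := funext fun t => legendreP_eval l t
  rw [h, iteratedDeriv_eval, u]

lemma u_succ (l n : ℕ) : u l (n+1) = derivative (u l n) := by
  rw [u, u, Function.iterate_succ_apply']

lemma u_eq (l n : ℕ) :
    u l n = C (1/((2:ℝ)^l * (Nat.factorial l : ℝ))) * derivative^[l + n] (fP l) := by
  rw [u, Pl, Polynomial.iterate_derivative_C_mul, Nat.add_comm, Function.iterate_add_apply]

lemma fP_deriv (l : ℕ) :
    (X^2 - 1) * derivative (fP l) = C (2*(l:ℝ)) * X * fP l := by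
  cases l with
  | zero => simp [fP]
  | succ m =>
    rw [fP, Polynomial.derivative_pow]
    have h2 : derivative (X^2 - 1 : ℝ[X]) = 2 * X := by
      simp [Polynomial.derivative_X_pow]; exact one_add_one_eq_two
    rw [h2]
    simp only [Nat.add_sub_cancel, map_mul, map_add, map_ofNat, map_one, Polynomial.C_eq_natCast]
    push_cast
    ring

lemma derivative_Xsq : derivative (X^2 - 1 : ℝ[X]) = 2 * X := by
  simp [Polynomial.derivative_X_pow]; exact one_add_one_eq_two

lemma fP_ode (l k : ℕ) :
    (X^2 - 1) * derivative^[k+2] (fP l) =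
      C (2*(l:ℝ) - 2*((k:ℝ)+1)) * X * derivative^[k+1] (fP l)
        + C (((k:ℝ)+1) * (2*(l:ℝ) - (k:ℝ))) * derivative^[k] (fP l) := by
  induction k with
  | zero =>
    have h := congrArg derivative (fP_deriv l)
    simp only [derivative_mul, derivative_C, derivative_X, derivative_Xsq] at h
    simp only [map_sub, map_mul, map_add, map_one, map_ofNat, C_eq_natCast,
      Function.iterate_succ_apply', Function.iterate_zero_apply] at h ⊢
    push_cast at h ⊢
    linear_combination h
  | succ k ih =>
    have h := congrArg derivative ih
    simp only [derivative_mul, derivative_add, derivative_C, derivative_X, derivative_Xsq] at h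
    simp only [map_sub, map_mul, map_add, map_one, map_ofNat, C_eq_natCast,
      Function.iterate_succ_apply', Function.iterate_zero_apply] at h ⊢
    push_cast at h ⊢
    linear_combination h
lemma u_ode (l n : ℕ) :
    (1 - X^2) * u l (n+2) =
      C (2*((n:ℝ)+1)) * X * u l (n+1)
        - C (((l:ℝ)+(n:ℝ)+1)*((l:ℝ)-(n:ℝ))) * u l n := by
  rw [u_eq l (n+2), u_eq l (n+1), u_eq l n,
    show l+(n+2) = (l+n)+2 from by omega, show l+(n+1) = (l+n)+1 from by omega]
  have h := fP_ode l (l+n)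
  simp only [map_sub, map_mul, map_add, map_one, map_ofNat, C_eq_natCast] at h ⊢
  push_cast at h ⊢
  linear_combination (-(C (1/((2:ℝ)^l * (Nat.factorial l : ℝ))) : ℝ[X])) * h

lemma V_deriv (l m : ℕ) :
    derivative ((1 - X^2)^(m+1) * u l (m+1)) =
      C (-(((l:ℝ)+(m:ℝ)+1)*((l:ℝ)-(m:ℝ)))) * ((1 - X^2)^m * u l m) := by
  rw [derivative_mul, derivative_pow, ← u_succ]
  have hd : derivative (1 - X^2 : ℝ[X]) = -(2*X) := by
    simp [Polynomial.derivative_X_pow]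
    exact one_add_one_eq_two
  rw [hd]
  have h := u_ode l m
  simp only [map_sub, map_mul, map_add, map_one, map_neg, map_ofNat, C_eq_natCast,
    Nat.add_sub_cancel] at h ⊢
  push_cast at h ⊢
  linear_combination ((1 - X^2 : ℝ[X]))^m * h

noncomputable def Lam (l : ℕ) : ℕ → ℝ
  | 0 => 1
  | (m+1) => Lam l m * (((l:ℝ)+m+1)*((l:ℝ)-m))

lemma eval_one_u_succ (l m : ℕ) :
    eval 1 (u l (m+1)) * (2*((m:ℝ)+1)) = (((l:ℝ)+m+1)*((l:ℝ)-m)) * eval 1 (u l m) := by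
  have h := congrArg (eval 1) (u_ode l m)
  simp only [eval_mul, eval_sub, eval_add, eval_one, eval_pow, eval_X, eval_C] at h
  norm_num at h
  linear_combination -h

lemma eval_negone_u_succ (l m : ℕ) :
    eval (-1) (u l (m+1)) * (2*((m:ℝ)+1)) =
      -((((l:ℝ)+m+1)*((l:ℝ)-m)) * eval (-1) (u l m)) := by
  have h := congrArg (eval (-1)) (u_ode l m)
  simp only [eval_mul, eval_sub, eval_add, eval_one, eval_pow, eval_X, eval_C] at h
  norm_num at h
  linear_combination h


lemma iter_deriv_root (a : ℝ) (q : ℝ[X]) (m : ℕ) :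
    ∀ k, k ≤ m → ∃ r : ℝ[X], derivative^[k] ((X - C a)^m * q) = (X - C a)^(m-k) * r
      ∧ r.eval a = (m.descFactorial k : ℝ) * q.eval a := by
  intro k
  induction k with
  | zero => exact fun _ => ⟨q, by simp⟩
  | succ k ih =>
    intro hk
    obtain ⟨r, hr, he⟩ := ih (Nat.le_of_succ_le hk)
    obtain ⟨j, hj⟩ : ∃ j, m - k = j + 1 :=
      ⟨m - (k+1), by omega⟩
    refine ⟨C ((j:ℝ)+1) * r + (X - C a) * derivative r, ?_, ?_⟩
    · rw [Function.iterate_succ_apply', hr, derivative_mul, derivative_pow, hj]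
      have hj2 : m - (k+1) = j := by omega
      rw [hj2]
      simp only [Nat.add_sub_cancel, derivative_sub, derivative_X, derivative_C, sub_zero,
        Nat.cast_add, Nat.cast_one]
      ring
    · have : (m.descFactorial (k+1) : ℝ) = ((j:ℝ)+1) * (m.descFactorial k : ℝ) := by
        rw [Nat.descFactorial_succ]
        rw [hj]
        push_cast
        ring
      rw [this]
      simp [he]
      ring

lemma eval_root_lt (a : ℝ) (q : ℝ[X]) (m k : ℕ) (h : k < m) :
    eval a (derivative^[k] ((X - C a)^m * q)) = 0 := by
  obtain ⟨r, hr, -⟩ := iter_deriv_root a q m k (le_of_lt h)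
  rw [hr]
  obtain ⟨j, hj⟩ : ∃ j, m - k = j + 1 := ⟨m - (k+1), by omega⟩
  simp [hj]

lemma eval_root_eq (a : ℝ) (q : ℝ[X]) (m : ℕ) :
    eval a (derivative^[m] ((X - C a)^m * q)) = (m.factorial : ℝ) * q.eval a := by
  obtain ⟨r, hr, he⟩ := iter_deriv_root a q m m le_rfl
  rw [hr]
  simp [he, Nat.descFactorial_self]

lemma fP_eq_one (l : ℕ) : fP l = (X - C 1)^l * ((X + C 1)^l) := by
  rw [fP, ← mul_pow]; congr 1; rw [C_1]; ring

lemma fP_eq_negone (l : ℕ) : fP l = (X - C (-1))^l * ((X - C 1)^l) := by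
  rw [fP, ← mul_pow]; congr 1; rw [C_1, map_neg, C_1]; ring

lemma fP_boundary_one (l j : ℕ) (h : j < l) : eval 1 (derivative^[j] (fP l)) = 0 := by
  rw [fP_eq_one]; exact eval_root_lt 1 _ l j h

lemma fP_boundary_negone (l j : ℕ) (h : j < l) : eval (-1) (derivative^[j] (fP l)) = 0 := by
  rw [fP_eq_negone]; exact eval_root_lt (-1) _ l j h

lemma Pl_eval_one (l : ℕ) : eval 1 (Pl l) = 1 := by
  rw [Pl, eval_mul, eval_C, fP_eq_one, eval_root_eq]
  have : eval 1 ((X + C 1 : ℝ[X])^l) = 2^l := by simp; norm_num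
  rw [this]
  have h1 : ((2:ℝ)^l) ≠ 0 := by positivity
  have h2 : ((Nat.factorial l : ℝ)) ≠ 0 := by
    exact_mod_cast Nat.factorial_ne_zero l
  field_simp

lemma Pl_eval_negone (l : ℕ) : eval (-1) (Pl l) = (-1)^l := by
  rw [Pl, eval_mul, eval_C, fP_eq_negone, eval_root_eq]
  have : eval (-1) ((X - C 1 : ℝ[X])^l) = (-2)^l := by simp; norm_num
  rw [this]
  have h1 : ((2:ℝ)^l) ≠ 0 := by positivity
  have h2 : ((Nat.factorial l : ℝ)) ≠ 0 := by
    exact_mod_cast Nat.factorial_ne_zero l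
  field_simp
  rw [neg_pow (2:ℝ) l]
  ring

noncomputable def J (p : ℝ[X]) : ℝ := ∫ x in (-1:ℝ)..1, p.eval x

lemma J_integrable (p : ℝ[X]) :
    IntervalIntegrable (fun x => p.eval x) MeasureTheory.volume (-1) 1 :=
  p.continuous.intervalIntegrable _ _

lemma J_add (p q : ℝ[X]) : J (p + q) = J p + J q := by
  simp only [J, eval_add]
  exact intervalIntegral.integral_add (J_integrable p) (J_integrable q)

lemma J_Cmul (c : ℝ) (p : ℝ[X]) : J (C c * p) = c * J p := by
  simp only [J, eval_mul, eval_C]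
  exact intervalIntegral.integral_const_mul c _

lemma J_sub (p q : ℝ[X]) : J (p - q) = J p - J q := by
  have h : J (p - q) + J q = J p := by rw [← J_add]; ring_nf
  linarith

lemma J_parts (p q : ℝ[X]) :
    J (p * derivative q) = eval 1 p * eval 1 q - eval (-1) p * eval (-1) q
      - J (derivative p * q) := by
  simp only [J, eval_mul]
  exact intervalIntegral.integral_mul_deriv_eq_deriv_mul
    (fun x _ => p.hasDerivAt x) (fun x _ => q.hasDerivAt x)
    (J_integrable _) (J_integrable _)

lemma J_parts' (p q : ℝ[X]) :
    J (derivative p * q) = eval 1 p * eval 1 q - eval (-1) p * eval (-1) q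
      - J (p * derivative q) := by
  have := J_parts p q
  linarith

lemma J_iter_parts (k : ℕ) : ∀ p q : ℝ[X],
    (∀ j, j < k → eval 1 (derivative^[j] p) = 0) →
    (∀ j, j < k → eval (-1) (derivative^[j] p) = 0) →
    J (derivative^[k] p * q) = (-1)^k * J (p * derivative^[k] q) := by
  induction k with
  | zero => intro p q _ _; simp
  | succ k ih =>
    intro p q h1 h2
    have step : J (derivative^[k+1] p * q) = - J (derivative^[k] p * derivative q) := by
      rw [Function.iterate_succ_apply']
      rw [J_parts' (derivative^[k] p) q]
      rw [h1 k (Nat.lt_succ_self k), h2 k (Nat.lt_succ_self k)]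
      ring
    rw [step, ih p (derivative q) (fun j hj => h1 j (Nat.lt_succ_of_lt hj))
      (fun j hj => h2 j (Nat.lt_succ_of_lt hj))]
    rw [← Function.iterate_succ_apply]
    ring

lemma iterate_deriv_add (k : ℕ) (p q : ℝ[X]) :
    derivative^[k] (p + q) = derivative^[k] p + derivative^[k] q := by
  induction k with
  | zero => rfl
  | succ k ih => simp only [Function.iterate_succ_apply', ih, derivative_add]

lemma J_orth (l : ℕ) (r : ℝ[X]) (hr : r.natDegree < l) : J (Pl l * r) = 0 := by
  rw [Pl, mul_assoc, J_Cmul,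
    J_iter_parts l (fP l) r (fun j hj => fP_boundary_one l j hj)
      (fun j hj => fP_boundary_negone l j hj),
    Polynomial.iterate_derivative_eq_zero hr]
  have hz : J (fP l * 0) = 0 := by
    rw [mul_zero]; simp [J]
  rw [hz]; ring

lemma fP_monic (l : ℕ) : (fP l).Monic := by
  rw [fP]
  have : (X^2 - 1 : ℝ[X]) = X^2 - C 1 := by rw [C_1]
  rw [this]
  exact (monic_X_pow_sub_C (1:ℝ) (by norm_num)).pow l

lemma fP_natDegree (l : ℕ) : (fP l).natDegree = 2*l := by
  rw [fP]
  have : (X^2 - 1 : ℝ[X]) = X^2 - C 1 := by rw [C_1]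
  rw [this, natDegree_pow, natDegree_X_pow_sub_C, mul_comm]

lemma iterate_derivative_fP (l : ℕ) : derivative^[2*l] (fP l) = C (((2*l).factorial : ℝ)) := by
  have hsplit : fP l = X^(2*l) + (fP l - X^(2*l)) := by ring
  have hlow : derivative^[2*l] (fP l - X^(2*l)) = 0 := by
    rcases eq_or_ne (fP l - X^(2*l)) 0 with h | h
    · rw [h]; simp
    · apply Polynomial.iterate_derivative_eq_zero
      rw [natDegree_lt_iff_degree_lt h]
      have h1 : (fP l).degree = ((2*l : ℕ) : WithBot ℕ) := by
        rw [Polynomial.degree_eq_natDegree (fP_monic l).ne_zero, fP_natDegree]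
      have h2 := Polynomial.degree_sub_lt (p := fP l) (q := X^(2*l))
        (by rw [h1, degree_X_pow]) (fP_monic l).ne_zero
        (by rw [(fP_monic l).leadingCoeff, leadingCoeff_X_pow])
      rw [h1] at h2
      exact h2
  calc derivative^[2*l] (fP l)
      = derivative^[2*l] (X^(2*l)) + derivative^[2*l] (fP l - X^(2*l)) := by
        rw [← iterate_deriv_add, ← hsplit]
    _ = C (((2*l).factorial : ℝ)) := by
        rw [hlow, add_zero, Polynomial.iterate_derivative_X_pow_eq_C_mul,
          Nat.sub_self, pow_zero, mul_one, Nat.descFactorial_self]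

lemma deriv_one_minus_X_sq_pow (m : ℕ) :
    derivative ((1 - X^2 : ℝ[X])^(m+1)) = C (-(2*(m:ℝ)+2)) * (X * (1 - X^2)^m) := by
  rw [derivative_pow]
  have hd : derivative (1 - X^2 : ℝ[X]) = -(2*X) := by
    simp [Polynomial.derivative_X_pow]; exact one_add_one_eq_two
  rw [hd]
  simp only [Nat.add_sub_cancel, map_neg, map_add, map_mul, map_ofNat, C_eq_natCast]
  push_cast
  ring

lemma W_succ (m : ℕ) :
    J ((1 - X^2 : ℝ[X])^(m+1)) * (2*(m:ℝ)+3) = (2*(m:ℝ)+2) * J ((1-X^2)^m) := by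
  have hp := J_parts X ((1 - X^2 : ℝ[X])^(m+1))
  rw [deriv_one_minus_X_sq_pow] at hp
  have hx : (X : ℝ[X]) * (C (-(2*(m:ℝ)+2)) * (X * (1 - X^2)^m))
      = C (-(2*(m:ℝ)+2)) * ((1 - X^2)^m - (1 - X^2)^(m+1)) := by ring
  rw [hx, J_Cmul, J_sub] at hp
  simp only [eval_X, eval_pow, eval_sub, eval_one, derivative_X, one_mul] at hp
  norm_num at hp
  linear_combination hp

lemma W_base : J ((1 - X^2 : ℝ[X])^0) = 2 := by
  simp [J]
  norm_num

lemma W_closed : ∀ m : ℕ, J ((1 - X^2 : ℝ[X])^m) * (((2*m+1).factorial : ℝ))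
    = 2^(2*m+1) * ((m.factorial : ℝ))^2 := by
  intro m
  induction m with
  | zero => rw [W_base]; norm_num [Nat.factorial]
  | succ m ih =>
    have hs := W_succ m
    have h3 : ((2*(m+1)+1).factorial : ℝ)
        = (2*(m:ℝ)+3) * ((2*(m:ℝ)+2) * (((2*m+1).factorial : ℝ))) := by
      have e : 2*(m+1)+1 = ((2*m+1)+1)+1 := by omega
      rw [e, Nat.factorial_succ, Nat.factorial_succ]
      push_cast
      ring
    have h4 : (((m+1).factorial : ℝ)) = ((m:ℝ)+1) * ((m.factorial : ℝ)) := by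
      rw [Nat.factorial_succ]; push_cast; ring
    rw [h3, h4]
    linear_combination ((2*(m:ℝ)+2) * (((2*m+1).factorial : ℝ))) * hs
      + (2*(m:ℝ)+2)^2 * ih

lemma fP_eq_C_mul (l : ℕ) : fP l = C ((-1:ℝ)^l) * (1 - X^2)^l := by
  rw [fP, map_pow, ← mul_pow]
  congr 1
  rw [map_neg, C_1]
  ring

lemma J_Pl_sq (l : ℕ) : J (Pl l * Pl l) * (2*(l:ℝ)+1) = 2 := by
  have e1 : Pl l * Pl l = C (1/((2:ℝ)^l * ((l.factorial:ℝ))))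
      * (C (1/((2:ℝ)^l * ((l.factorial:ℝ))))
        * (derivative^[l] (fP l) * derivative^[l] (fP l))) := by
    rw [Pl]; ring
  rw [e1, J_Cmul, J_Cmul,
    J_iter_parts l (fP l) (derivative^[l] (fP l))
      (fun j hj => fP_boundary_one l j hj) (fun j hj => fP_boundary_negone l j hj),
    ← Function.iterate_add_apply, show l + l = 2*l from by ring, iterate_derivative_fP]
  have e2 : fP l * C (((2*l).factorial:ℝ))
      = C (((2*l).factorial:ℝ)) * (C ((-1:ℝ)^l) * (1-X^2)^l) := by
    rw [fP_eq_C_mul]; ring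
  rw [e2, J_Cmul, J_Cmul]
  have hW := W_closed l
  have h2l : (((2*l+1).factorial : ℝ)) = (2*(l:ℝ)+1) * (((2*l).factorial : ℝ)) := by
    rw [Nat.factorial_succ]; push_cast; ring
  have hfne : ((l.factorial:ℝ)) ≠ 0 := by exact_mod_cast Nat.factorial_ne_zero l
  have h2ne : ((2:ℝ))^l ≠ 0 := by positivity
  rw [h2l] at hW
  have hsq : ((-1:ℝ)^l) * ((-1:ℝ)^l) = 1 := by
    rw [← pow_add]
    exact Even.neg_one_pow ⟨l, by ring⟩
  field_simp
  linear_combination (((-1:ℝ)^l)*((-1:ℝ)^l)) * hW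
    + ((2:ℝ)^(2*l+1) * ((l.factorial:ℝ))^2) * hsq

lemma u_zero (l : ℕ) : u l 0 = Pl l := rfl

lemma eval_one_u (l : ℕ) : ∀ m, eval 1 (u l m) * ((2:ℝ)^m * (m.factorial : ℝ)) = Lam l m := by
  intro m
  induction m with
  | zero => simp [u_zero, Pl_eval_one, Lam]
  | succ m ih =>
    have h := eval_one_u_succ l m
    have hf : (((m+1).factorial : ℝ)) = ((m:ℝ)+1) * (m.factorial : ℝ) := by
      rw [Nat.factorial_succ]; push_cast; ring
    rw [hf, Lam, ← ih]
    calc eval 1 (u l (m+1)) * ((2:ℝ)^(m+1) * (((m:ℝ)+1) * (m.factorial:ℝ)))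
        = (eval 1 (u l (m+1)) * (2*((m:ℝ)+1))) * ((2:ℝ)^m * (m.factorial:ℝ)) := by ring
      _ = eval 1 (u l m) * ((2:ℝ)^m * (m.factorial:ℝ)) * (((l:ℝ)+m+1)*((l:ℝ)-m)) := by
          rw [h]; ring

lemma eval_negone_u (l : ℕ) : ∀ m, eval (-1) (u l m) = (-1:ℝ)^(l+m) * eval 1 (u l m) := by
  intro m
  induction m with
  | zero => simp [u_zero, Pl_eval_one, Pl_eval_negone]
  | succ m ih =>
    have h1 := eval_one_u_succ l m
    have h2 := eval_negone_u_succ l m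
    have hne : (2*((m:ℝ)+1)) ≠ 0 := by positivity
    apply mul_right_cancel₀ hne
    rw [h2, ih]
    linear_combination (-((-1:ℝ)^(l+(m+1)))) * h1

lemma Lam_fact (l : ℕ) : ∀ n, n ≤ l →
    Lam l n * (((l-n).factorial : ℝ)) = (((l+n).factorial : ℝ)) := by
  intro n
  induction n with
  | zero => simp [Lam]
  | succ n ih =>
    intro hn
    have ihn := ih (by omega)
    have e1 : l - n = (l - (n+1)) + 1 := by omega
    have e2 : (((l-n).factorial : ℝ)) = ((l:ℝ)-n) * (((l-(n+1)).factorial : ℝ)) := by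
      rw [e1, Nat.factorial_succ, Nat.cast_mul, Nat.cast_add_one, Nat.cast_sub hn]
      push_cast
      ring
    have e3 : (((l+(n+1)).factorial : ℝ)) = ((l:ℝ)+n+1) * (((l+n).factorial : ℝ)) := by
      rw [show l+(n+1) = (l+n)+1 from by omega, Nat.factorial_succ]
      push_cast; ring
    rw [Lam, e3, ← ihn]
    have hlne : ((l:ℝ) - n) ≠ 0 := by
      have : (n:ℝ) < l := by exact_mod_cast Nat.lt_of_succ_le hn
      linarith
    field_simp [e2]
    rw [e2]
    ring

lemma B_succ (l m : ℕ) :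
    J ((1-X^2)^(m+1) * (u l (m+1) * u l (m+1)))
      = (((l:ℝ)+m+1)*((l:ℝ)-m)) * J ((1-X^2)^m * (u l m * u l m)) := by
  have hp := J_parts ((1-X^2)^(m+1) * u l (m+1)) (u l m)
  rw [← u_succ, V_deriv] at hp
  have e1 : (1-X^2:ℝ[X])^(m+1) * u l (m+1) * u l (m+1)
      = (1-X^2)^(m+1) * (u l (m+1) * u l (m+1)) := by ring
  have e2 : C (-(((l:ℝ)+(m:ℝ)+1)*((l:ℝ)-(m:ℝ)))) * ((1 - X^2) ^ m * u l m) * u l m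
      = C (-(((l:ℝ)+(m:ℝ)+1)*((l:ℝ)-(m:ℝ)))) * ((1 - X^2) ^ m * (u l m * u l m)) := by ring
  rw [e1, e2, J_Cmul] at hp
  have hb1 : eval 1 ((1-X^2:ℝ[X])^(m+1) * u l (m+1)) = 0 := by
    simp [eval_mul, eval_pow]
  have hb2 : eval (-1) ((1-X^2:ℝ[X])^(m+1) * u l (m+1)) = 0 := by
    simp [eval_mul, eval_pow]
  rw [hb1, hb2] at hp
  linarith [hp]

lemma B_val (l : ℕ) : ∀ m, J ((1-X^2)^m * (u l m * u l m)) * (2*(l:ℝ)+1) = 2 * Lam l m := by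
  intro m
  induction m with
  | zero =>
    have : ((1-X^2:ℝ[X])^0 * (u l 0 * u l 0)) = Pl l * Pl l := by
      rw [u_zero]; ring
    rw [this, J_Pl_sq, Lam]; ring
  | succ m ih =>
    rw [B_succ, Lam]
    linear_combination (((l:ℝ)+m+1)*((l:ℝ)-m)) * ih

lemma natDegree_u_le (l m : ℕ) : (u l m).natDegree ≤ l - m := by
  have h1 : (Pl l).natDegree ≤ l := by
    refine le_trans (natDegree_C_mul_le _ _) ?_
    refine le_trans (natDegree_iterate_derivative _ _) ?_
    rw [fP_natDegree]; omega
  have h2 := natDegree_iterate_derivative (Pl l) m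
  rw [u]; omega

lemma C_val (l k : ℕ) (hkl : k + 1 ≤ l) :
    J ((1-X^2)^k * (u l (k+1) * u l (k+1))) * ((k:ℝ)+1) = Lam l (k+1) := by
  set qn := (1-X^2:ℝ[X])^k * u l (k+1) with hqn
  have base1 : ((X : ℝ[X]) - C 1) * (-(X + C 1)) = 1 - X^2 := by rw [C_1]; ring
  have base2 : ((X : ℝ[X]) - C (-1)) * (1 - X) = 1 - X^2 := by rw [map_neg, C_1]; ring
  have eq1 : qn = (X - C 1)^k * ((-(X + C 1))^k * u l (k+1)) := by
    rw [hqn, ← mul_assoc, ← mul_pow, base1]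
  have eq2 : qn = (X - C (-1))^k * ((1 - X)^k * u l (k+1)) := by
    rw [hqn, ← mul_assoc, ← mul_pow, base2]
  have hb1 : ∀ j, j < k → eval 1 (derivative^[j] qn) = 0 := by
    intro j hj; rw [eq1]; exact eval_root_lt 1 _ k j hj
  have hb2 : ∀ j, j < k → eval (-1) (derivative^[j] qn) = 0 := by
    intro j hj; rw [eq2]; exact eval_root_lt (-1) _ k j hj
  have hu : derivative^[k] (u l 1) = u l (k+1) := by
    rw [u, u, ← Function.iterate_add_apply]
  have step1 := J_iter_parts k qn (u l 1) hb1 hb2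
  rw [hu] at step1
  -- step2 : expand J (D^[k] qn * u l 1) by parts
  have hd : u l 1 = derivative (Pl l) := u_succ l 0
  have hp := J_parts (derivative^[k] qn) (Pl l)
  rw [← hd, Pl_eval_one, Pl_eval_negone] at hp
  -- orthogonality
  have horth : J (derivative (derivative^[k] qn) * Pl l) = 0 := by
    rw [mul_comm]
    apply J_orth
    rw [show derivative (derivative^[k] qn) = derivative^[k+1] qn from
      (Function.iterate_succ_apply' _ _ _).symm]
    have d1 : (1-X^2:ℝ[X]).natDegree ≤ 2 := by
      have : (1-X^2:ℝ[X]) = -(X^2 - C 1) := by rw [C_1]; ring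
      rw [this, natDegree_neg, natDegree_X_pow_sub_C]
    have d2 : ((1-X^2:ℝ[X])^k).natDegree ≤ 2*k :=
      le_trans natDegree_pow_le (by nlinarith)
    have d3 : qn.natDegree ≤ 2*k + (l - (k+1)) :=
      le_trans natDegree_mul_le (add_le_add d2 (natDegree_u_le l (k+1)))
    have d4 := natDegree_iterate_derivative qn (k+1)
    omega
  rw [horth] at hp
  -- boundary values
  have hv1 : eval 1 (derivative^[k] qn) = (k.factorial:ℝ) * ((-2:ℝ)^k * eval 1 (u l (k+1))) := by
    rw [eq1, eval_root_eq]
    simp only [eval_mul, eval_pow, eval_neg, eval_add, eval_X, eval_C, eval_one]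
    norm_num
  have hv2 : eval (-1) (derivative^[k] qn)
      = (k.factorial:ℝ) * ((2:ℝ)^k * eval (-1) (u l (k+1))) := by
    rw [eq2, eval_root_eq]
    simp only [eval_mul, eval_pow, eval_sub, eval_X, eval_C, eval_one]
    norm_num
  rw [hv1, hv2, eval_negone_u] at hp
  -- combine
  have e3 : qn * u l (k+1) = (1-X^2)^k * (u l (k+1) * u l (k+1)) := by rw [hqn]; ring
  rw [e3] at step1
  have hs : (-1:ℝ)^(l+(k+1)) * (-1:ℝ)^l = (-1:ℝ)^(k+1) := by
    rw [← pow_add, show l+(k+1)+l = 2*l + (k+1) from by ring, pow_add, pow_mul]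
    norm_num
  have he := eval_one_u l (k+1)
  have hfac : (((k+1).factorial : ℝ)) = ((k:ℝ)+1) * (k.factorial:ℝ) := by
    rw [Nat.factorial_succ]; push_cast; ring
  rw [hfac] at he
  have hB : J (derivative^[k] qn * u l 1)
      = (-1:ℝ)^k * (2^(k+1) * ((k.factorial:ℝ) * eval 1 (u l (k+1)))) := by
    rw [hp]
    have hneg : (-2:ℝ)^k = (-1:ℝ)^k * 2^k := by rw [← neg_one_mul, mul_pow]
    linear_combination (-((k.factorial:ℝ) * 2^k * eval 1 (u l (k+1)))) * hs
      + ((k.factorial:ℝ) * eval 1 (u l (k+1))) * hneg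
  have hT : J ((1-X^2)^k * (u l (k+1) * u l (k+1)))
      = 2^(k+1) * ((k.factorial:ℝ) * eval 1 (u l (k+1))) :=
    mul_left_cancel₀ (pow_ne_zero k (by norm_num : (-1:ℝ) ≠ 0)) (step1.symm.trans hB)
  rw [hT]
  linear_combination he

noncomputable def Nval (l n : ℕ) : ℝ :=
  (1 + 2 * (l : ℝ)) * (Nat.factorial (l - n) : ℝ) / (2 * (Nat.factorial (l + n) : ℝ))

noncomputable def Gpoly (l k : ℕ) : ℝ[X] :=
  C (Nval l (k+1)) * ((1-X^2)^k * (u l (k+1) * u l (k+1))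
    - C 2 * ((1-X^2)^(k+1) * (u l (k+1) * u l (k+1))))

lemma Nval_nonneg (l n : ℕ) : 0 ≤ Nval l n := by
  apply div_nonneg <;> positivity

lemma pageY_sq (l n : ℕ) (s : ℝ) (hs : 0 ≤ Real.sin s) :
    (pageY l n s)^2
      = Nval l n * (Real.sin s *
          (Real.sin s ^ n * eval (Real.cos s) (u l n))^2) := by
  rw [pageY, assocLegendreP, iteratedDeriv_legendreP_eval]
  have hcos : 1 - Real.cos s ^ 2 = Real.sin s ^ 2 := by
    have := Real.sin_sq_add_cos_sq s; linarith
  have hrpow : (1 - Real.cos s ^ 2) ^ (((n:ℕ):ℝ)/2) = Real.sin s ^ n := by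
    rw [hcos]
    have h2 : (Real.sin s ^ 2) = Real.sin s ^ ((2:ℕ):ℝ) := by
      rw [Real.rpow_natCast]
    rw [h2, ← Real.rpow_mul hs]
    have h3 : ((2:ℕ):ℝ) * (((n:ℕ):ℝ)/2) = ((n:ℕ):ℝ) := by push_cast; ring
    rw [h3, Real.rpow_natCast]
  rw [hrpow]
  have e : (Real.sqrt (Nval l n) * (Real.sqrt (Real.sin s)
        * (Real.sin s ^ n * eval (Real.cos s) (u l n))))^2
      = Real.sqrt (Nval l n)^2 * (Real.sqrt (Real.sin s)^2
        * (Real.sin s ^ n * eval (Real.cos s) (u l n))^2) := by ring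
  rw [show (1 + 2 * (l : ℝ)) * (Nat.factorial (l - n) : ℝ)
      / (2 * (Nat.factorial (l + n) : ℝ)) = Nval l n from rfl]
  rw [e, Real.sq_sqrt (Nval_nonneg l n), Real.sq_sqrt hs]

lemma pointwise (l k : ℕ) (s : ℝ) (hs : 0 ≤ Real.sin s) :
    Real.cos (2*s) * (1/Real.sin s)^2 * (pageY l (k+1) s)^2
      = Real.sin s * eval (Real.cos s) (Gpoly l k) := by
  have hps := pageY_sq l (k+1) s hs
  have hcos : 1 - Real.cos s ^ 2 = Real.sin s ^ 2 := by
    have := Real.sin_sq_add_cos_sq s; linarith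
  have hc2 : Real.cos (2*s) = 1 - 2*(Real.sin s)^2 := by
    rw [Real.cos_two_mul]; linarith
  have hev : eval (Real.cos s) (Gpoly l k)
      = Nval l (k+1) * ((Real.sin s^2)^k * (eval (Real.cos s) (u l (k+1)))^2
        - 2 * ((Real.sin s^2)^(k+1) * (eval (Real.cos s) (u l (k+1)))^2)) := by
    simp only [Gpoly, eval_mul, eval_sub, eval_pow, eval_C, eval_one, eval_X, eval_ofNat]
    rw [hcos]
    ring
  rw [hps, hc2, hev]
  rcases eq_or_lt_of_le hs with h0 | hpos
  · rw [← h0]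
    simp [zero_pow (Nat.succ_ne_zero k)]
  · have hne : Real.sin s ≠ 0 := ne_of_gt hpos
    field_simp
    ring

lemma substitution (l k : ℕ) :
    (∫ s in (0:ℝ)..π, Real.sin s * eval (Real.cos s) (Gpoly l k)) = J (Gpoly l k) := by
  have h := intervalIntegral.integral_comp_smul_deriv
    (a := 0) (b := π) (f := Real.cos) (f' := fun s => -Real.sin s)
    (g := fun x => eval x (Gpoly l k))
    (fun x _ => Real.hasDerivAt_cos x) (Real.continuous_sin.neg.continuousOn)
    (Gpoly l k).continuous
  simp only [Real.cos_zero, Real.cos_pi, Function.comp, smul_eq_mul] at h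
  rw [J, intervalIntegral.integral_symm (1:ℝ) (-1), ← h, ← intervalIntegral.integral_neg]
  congr 1
  funext s
  ring

lemma Gval (l k : ℕ) (hnl : k + 1 ≤ l) :
    J (Gpoly l k) = (2*(l:ℝ)+1-4*((k:ℝ)+1))/(2*((k:ℝ)+1)) := by
  rw [Gpoly, J_Cmul, J_sub, J_Cmul]
  have hC := C_val l k hnl
  have hB := B_val l (k+1)
  have hLam := Lam_fact l (k+1) hnl
  have f1 : ((l - (k+1)).factorial : ℝ) ≠ 0 := by
    exact_mod_cast Nat.factorial_ne_zero _
  have f2 : ((l + (k+1)).factorial : ℝ) ≠ 0 := by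
    exact_mod_cast Nat.factorial_ne_zero _
  have f3 : (2*(l:ℝ)+1) ≠ 0 := by positivity
  have f4 : ((k:ℝ)+1) ≠ 0 := by positivity
  have hJc : J ((1-X^2)^k * (u l (k+1) * u l (k+1))) = Lam l (k+1) / ((k:ℝ)+1) := by
    rw [eq_div_iff f4]; exact hC
  have hJb : J ((1-X^2)^(k+1) * (u l (k+1) * u l (k+1)))
      = 2 * Lam l (k+1) / (2*(l:ℝ)+1) := by
    rw [eq_div_iff f3]; linarith [hB]
  have hLv : Lam l (k+1) = ((l + (k+1)).factorial : ℝ) / ((l - (k+1)).factorial : ℝ) := by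
    rw [eq_div_iff f1]; exact hLam
  rw [hJc, hJb, hLv, Nval]
  field_simp
  ring

end PageAux

open Polynomial PageAux in
/-- For integers `1 ≤ n ≤ ℓ`, the integral `∫₀^π cos(2s) csc²(s) y_{ℓ,n}(s)² ds` converges and
equals `(2ℓ + 1 − 4n)/(2n)`. -/
theorem integral_cos2s_cscsq_pageY (l n : ℕ) (hn1 : 1 ≤ n) (hnl : n ≤ l) :
    IntervalIntegrable (fun s => Real.cos (2 * s) * (1 / Real.sin s) ^ 2 * (pageY l n s) ^ 2)
      MeasureTheory.volume 0 π ∧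
    (∫ s in (0 : ℝ)..π, Real.cos (2 * s) * (1 / Real.sin s) ^ 2 * (pageY l n s) ^ 2) =
      (2 * (l : ℝ) + 1 - 4 * (n : ℝ)) / (2 * (n : ℝ)) := by
  obtain ⟨k, rfl⟩ : ∃ k, n = k + 1 := ⟨n - 1, by omega⟩
  have hpi : (0:ℝ) ≤ π := Real.pi_pos.le
  have heqOn : ∀ s ∈ Icc (0:ℝ) π,
      Real.cos (2*s) * (1/Real.sin s)^2 * (pageY l (k+1) s)^2
        = Real.sin s * eval (Real.cos s) (Gpoly l k) := fun s hs =>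
    pointwise l k s (Real.sin_nonneg_of_nonneg_of_le_pi hs.1 hs.2)
  have cont : Continuous (fun s => Real.sin s * eval (Real.cos s) (Gpoly l k)) :=
    Real.continuous_sin.mul ((Gpoly l k).continuous.comp Real.continuous_cos)
  constructor
  · apply (cont.intervalIntegrable 0 π).congr
    have hsub : Set.uIoc (0:ℝ) π ⊆ Icc 0 π := by
      rw [uIoc_of_le hpi]; exact Ioc_subset_Icc_self
    intro s hs
    exact (heqOn s (hsub hs)).symm
  · rw [intervalIntegral.integral_congr (g := fun s => Real.sin s * eval (Real.cos s) (Gpoly l k))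
      (by rw [uIcc_of_le hpi]; exact fun s hs => heqOn s hs)]
    rw [substitution l k, Gval l k hnl]
    push_cast
    ring
end

section
/- Let n ≥ 1 and k ≥ 0 be integers, let ν be a real number, and set μ = (2k+n)(2k+n+2) − n². Then μ/4 + n(n+1) + ∫₀^π δV(s) [y_{n,n}(s)]² ds = n² + 3n/2 + kn + k + k² + ν²·(2k²(n+2) + 2k(n²+3n+2) − n(n+1))/(2n+3). -/
open Set Real

/-- The first-order perturbation potential
`δV(s) = (ν² csc²(s)/32)·[5μ − 4(μ + 4n² + 1)cos(2s) + 32n² s cot(s) − 16n² − μ cos(4s)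
− 8 s cot(s) + 12]`. -/
noncomputable def deltaV (n : ℕ) (ν μ : ℝ) (s : ℝ) : ℝ :=
  (ν ^ 2 * (1 / Real.sin s) ^ 2 / 32) *
    (5 * μ - 4 * (μ + 4 * (n : ℝ) ^ 2 + 1) * Real.cos (2 * s) +
      32 * (n : ℝ) ^ 2 * s * (Real.cos s / Real.sin s) - 16 * (n : ℝ) ^ 2 -
      μ * Real.cos (4 * s) - 8 * s * (Real.cos s / Real.sin s) + 12)


open Polynomial MeasureTheory intervalIntegral in
private lemma aux_poly_iteratedDeriv (k : ℕ) (p : ℝ[X]) :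
    iteratedDeriv k (fun x => p.eval x) = fun x => (derivative^[k] p).eval x := by
  induction k generalizing p with
  | zero => simp
  | succ k ih =>
    have hd : deriv (fun x => p.eval x) = fun x => (derivative p).eval x :=
      funext fun x => Polynomial.deriv p
    rw [iteratedDeriv_succ', hd, ih, Function.iterate_succ_apply]

open Polynomial in
private lemma aux_iterate_derivative_q (n : ℕ) :
    derivative^[2 * n] ((X ^ 2 - 1 : ℝ[X]) ^ n) = C ((2 * n).factorial : ℝ) := by
  set q : ℝ[X] := (X ^ 2 - 1) ^ n with hq
  have hmon : q.Monic := ((monic_X_pow_sub_C (1 : ℝ) two_ne_zero).pow n)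
  have hdeg : q.natDegree = 2 * n := by
    rw [hq, natDegree_pow]
    have : (X ^ 2 - 1 : ℝ[X]) = X ^ 2 - C 1 := by simp
    rw [this, natDegree_X_pow_sub_C]
    ring
  have hle : (derivative^[2 * n] q).natDegree ≤ 0 := by
    have := natDegree_iterate_derivative q (2 * n)
    omega
  have heq := (derivative^[2 * n] q).eq_C_of_natDegree_le_zero hle
  rw [heq, Polynomial.coeff_iterate_derivative]
  have hc : q.coeff (0 + 2 * n) = 1 := by
    rw [zero_add, ← hdeg]; exact hmon.coeff_natDegree
  rw [hc]
  simp [Nat.descFactorial_self]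

open Polynomial in
private lemma aux_legendreP_eq_poly (n : ℕ) :
    legendreP n = fun x =>
      (C (1 / ((2:ℝ) ^ n * n.factorial)) * derivative^[n] ((X ^ 2 - 1 : ℝ[X]) ^ n)).eval x := by
  funext x
  have h : (fun t : ℝ => (t ^ 2 - 1) ^ n) = fun t => ((X ^ 2 - 1 : ℝ[X]) ^ n).eval t := by
    funext t; simp
  rw [legendreP, h, aux_poly_iteratedDeriv]
  simp

open Polynomial in
private lemma aux_iteratedDeriv_legendreP (n : ℕ) (x : ℝ) :
    iteratedDeriv n (legendreP n) x = ((2 * n).factorial : ℝ) / ((2:ℝ) ^ n * n.factorial) := by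
  rw [aux_legendreP_eq_poly, aux_poly_iteratedDeriv]
  rw [Polynomial.iterate_derivative_C_mul]
  have : derivative^[n] (derivative^[n] ((X ^ 2 - 1 : ℝ[X]) ^ n)) =
      derivative^[2 * n] ((X ^ 2 - 1 : ℝ[X]) ^ n) := by
    rw [← Function.iterate_add_apply]; norm_num [two_mul]
  rw [this, aux_iterate_derivative_q]
  simp [div_eq_mul_inv, mul_comm]

/-- normalization constant for `pageY n n` squared. -/
noncomputable def auxNormC (n : ℕ) : ℝ :=
  (1 + 2 * (n:ℝ)) * ((2 * n).factorial : ℝ) / (2 * (4:ℝ) ^ n * ((n.factorial : ℝ)) ^ 2)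

private lemma aux_pageY_sq (n : ℕ) (s : ℝ) (hs : s ∈ Icc (0:ℝ) π) :
    pageY n n s ^ 2 = auxNormC n * Real.sin s ^ (2 * n + 1) := by
  have hsin : 0 ≤ Real.sin s := Real.sin_nonneg_of_nonneg_of_le_pi hs.1 hs.2
  have hrp : ((1 : ℝ) - Real.cos s ^ 2) ^ ((n : ℝ) / 2) = Real.sin s ^ n := by
    have h1 : (1 : ℝ) - Real.cos s ^ 2 = Real.sin s ^ 2 := (Real.sin_sq s).symm
    rw [h1, ← Real.rpow_natCast (Real.sin s) 2, ← Real.rpow_mul hsin]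
    have h2 : ((2:ℕ):ℝ) * ((n:ℝ) / 2) = (n:ℝ) := by push_cast; ring
    rw [h2, Real.rpow_natCast]
  have hA : (0:ℝ) ≤ (1 + 2 * (n : ℝ)) * (Nat.factorial (n - n) : ℝ) /
      (2 * (Nat.factorial (n + n) : ℝ)) := by positivity
  rw [pageY, assocLegendreP, aux_iteratedDeriv_legendreP, hrp]
  rw [mul_pow, mul_pow, mul_pow, Real.sq_sqrt hA, Real.sq_sqrt hsin]
  rw [auxNormC]
  have h2n : n + n = 2 * n := by ring
  rw [Nat.sub_self, Nat.factorial_zero, h2n]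
  have hfac : ((n.factorial : ℝ)) ≠ 0 := Nat.cast_ne_zero.mpr n.factorial_ne_zero
  have h4 : ((4:ℝ)) ^ n = ((2:ℝ) ^ n) ^ 2 := by
    rw [← pow_mul, show (4:ℝ) = 2^2 by norm_num, ← pow_mul, mul_comm]
  have hf2 : ((2 * n).factorial : ℝ) ≠ 0 := Nat.cast_ne_zero.mpr (2*n).factorial_ne_zero
  field_simp [h4]
  ring_nf; rw [h4]; ring

private lemma aux_integral_sin_odd (j : ℕ) :
    ∫ s in (0:ℝ)..π, Real.sin s ^ (2 * j + 1) =
      2 * 4 ^ j * ((j.factorial : ℝ)) ^ 2 / ((2 * j + 1).factorial : ℝ) := by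
  induction j with
  | zero => norm_num
  | succ j ih =>
    have h := integral_sin_pow (a := 0) (b := π) (2 * j + 1)
    have hb : (Real.sin 0) ^ (2 * j + 1 + 1) * Real.cos 0 -
        (Real.sin π) ^ (2 * j + 1 + 1) * Real.cos π = 0 := by simp
    have hrw : 2 * (j + 1) + 1 = 2 * j + 1 + 2 := by ring
    rw [hrw, h, hb, ih]
    have e1 : ((2 * j + 1 + 2).factorial : ℝ) =
        (2 * j + 3) * ((2 * j + 2) * ((2 * j + 1).factorial : ℝ)) := by
      have : 2 * j + 1 + 2 = (2 * j + 2) + 1 := by ring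
      rw [this, Nat.factorial_succ]
      have : 2 * j + 2 = (2 * j + 1) + 1 := by ring
      rw [this, Nat.factorial_succ]
      push_cast; ring
    have e2 : (((j+1).factorial : ℝ)) = (j + 1) * (j.factorial : ℝ) := by
      rw [Nat.factorial_succ]; push_cast; ring
    rw [e1, e2]
    have h1 : ((2 * j + 1).factorial : ℝ) ≠ 0 := Nat.cast_ne_zero.mpr (Nat.factorial_ne_zero _)
    have h2 : (2 * (j:ℝ) + 3) ≠ 0 := by positivity
    have h3 : (2 * (j:ℝ) + 2) ≠ 0 := by positivity
    field_simp
    push_cast; ring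

open intervalIntegral in
private lemma aux_parts_lemma (j : ℕ) :
    ∫ s in (0:ℝ)..π, s * (Real.cos s * Real.sin s ^ (2 * j)) =
      -(1 / (2 * (j:ℝ) + 1)) * ∫ s in (0:ℝ)..π, Real.sin s ^ (2 * j + 1) := by
  have key : ∫ s in (0:ℝ)..π, s * (((2*j+1 : ℕ) : ℝ) * Real.sin s ^ (2*j) * Real.cos s) =
      π * Real.sin π ^ (2*j+1) - 0 * Real.sin 0 ^ (2*j+1) -
        ∫ s in (0:ℝ)..π, 1 * Real.sin s ^ (2*j+1) := by
    apply integral_mul_deriv_eq_deriv_mul (u := fun x => x) (v := fun x => Real.sin x ^ (2*j+1))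
    · intro x _; exact hasDerivAt_id' x
    · intro x _
      have := (Real.hasDerivAt_sin x).fun_pow (2*j+1)
      simpa using this
    · exact (continuous_const).intervalIntegrable _ _
    · apply Continuous.intervalIntegrable; fun_prop
  have hπ : Real.sin π = 0 := Real.sin_pi
  rw [hπ] at key
  simp only [one_mul] at key
  have hz : (2*j+1 : ℕ) ≠ 0 := by omega
  have h0 : ((2*j+1 : ℕ) : ℝ) ≠ 0 := Nat.cast_ne_zero.mpr hz
  have lhs_eq : ∫ s in (0:ℝ)..π, s * (((2*j+1 : ℕ) : ℝ) * Real.sin s ^ (2*j) * Real.cos s) =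
      ((2*j+1 : ℕ) : ℝ) * ∫ s in (0:ℝ)..π, s * (Real.cos s * Real.sin s ^ (2 * j)) := by
    rw [← intervalIntegral.integral_const_mul]
    congr 1; funext s; ring
  rw [lhs_eq] at key
  rw [zero_pow (by omega : 2*j+1 ≠ 0)] at key
  have : ((2*j+1:ℕ):ℝ) = 2*(j:ℝ)+1 := by push_cast; ring
  rw [this] at key
  field_simp
  simp only [mul_assoc] at key ⊢; linarith [key]

private lemma aux_pointwise_eq (m : ℕ) (ν μ : ℝ) (s : ℝ) (hs : s ∈ Ioo (0:ℝ) π) :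
    deltaV (m+1) ν μ s * pageY (m+1) (m+1) s ^ 2 =
      ν ^ 2 * auxNormC (m+1) / 32 *
        ((-32 * ((m:ℝ)+1) ^ 2 + 8) * Real.sin s ^ (2*m+1) +
          (16 * μ + 32 * ((m:ℝ)+1) ^ 2 + 8) * Real.sin s ^ (2*m+3) +
          (-8 * μ) * Real.sin s ^ (2*m+5) +
          (32 * ((m:ℝ)+1) ^ 2 - 8) * (s * (Real.cos s * Real.sin s ^ (2*m)))) := by
  have hsin : 0 < Real.sin s := Real.sin_pos_of_pos_of_lt_pi hs.1 hs.2
  rw [aux_pageY_sq (m+1) s ⟨le_of_lt hs.1, le_of_lt hs.2⟩]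
  have hexp : 2 * (m+1) + 1 = 2*m + 3 := by ring
  rw [hexp]
  have hc2 : Real.cos (2*s) = 1 - 2 * Real.sin s ^ 2 := by
    rw [Real.cos_two_mul, Real.cos_sq']; ring
  have hc4 : Real.cos (4*s) = 1 - 8 * Real.sin s ^ 2 + 8 * Real.sin s ^ 4 := by
    have h4 : (4:ℝ) * s = 2 * (2*s) := by ring
    rw [h4, Real.cos_two_mul, hc2]; ring
  rw [deltaV, hc2, hc4]
  have p1 : Real.sin s ^ (2*m+1) = Real.sin s ^ (2*m) * Real.sin s ^ 1 := pow_add _ _ _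
  have p3 : Real.sin s ^ (2*m+3) = Real.sin s ^ (2*m) * Real.sin s ^ 3 := pow_add _ _ _
  have p5 : Real.sin s ^ (2*m+5) = Real.sin s ^ (2*m) * Real.sin s ^ 5 := pow_add _ _ _
  rw [p1, p3, p5]
  push_cast
  field_simp
  ring

open MeasureTheory intervalIntegral in
private lemma aux_integral_value (m : ℕ) (ν μ : ℝ) :
    (∫ s in (0:ℝ)..π, deltaV (m+1) ν μ s * (pageY (m+1) (m+1) s) ^ 2) =
      ν ^ 2 * (-((m:ℝ)+1) + μ * ((m:ℝ)+3) / (2 * (2*(m:ℝ)+5))) := by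
  set M := (m:ℝ)
  set b1 : ℝ := -32 * (M+1) ^ 2 + 8
  set b2 : ℝ := 16 * μ + 32 * (M+1) ^ 2 + 8
  set b3 : ℝ := -8 * μ
  set b4 : ℝ := 32 * (M+1) ^ 2 - 8
  have hcong : (∫ s in (0:ℝ)..π, deltaV (m+1) ν μ s * (pageY (m+1) (m+1) s) ^ 2) =
      ∫ s in (0:ℝ)..π, ν ^ 2 * auxNormC (m+1) / 32 *
        (b1 * Real.sin s ^ (2*m+1) + b2 * Real.sin s ^ (2*m+3) +
          b3 * Real.sin s ^ (2*m+5) + b4 * (s * (Real.cos s * Real.sin s ^ (2*m)))) := by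
    apply intervalIntegral.integral_congr_ae
    have h0 : ∀ᵐ (x:ℝ) ∂volume, x ≠ π := by
      refine (MeasureTheory.ae_iff).mpr ?_
      have : {x : ℝ | ¬ x ≠ π} = {π} := by ext x; simp
      rw [this]
      exact Real.volume_singleton
    filter_upwards [h0] with x hx hxI
    have hxI' : x ∈ Ioc (0:ℝ) π := by rwa [Set.uIoc_of_le Real.pi_pos.le] at hxI
    exact aux_pointwise_eq m ν μ x ⟨hxI'.1, lt_of_le_of_ne hxI'.2 hx⟩
  rw [hcong, intervalIntegral.integral_const_mul]
  have i1 : IntervalIntegrable (fun s => b1 * Real.sin s ^ (2*m+1)) volume 0 π := by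
    apply Continuous.intervalIntegrable; fun_prop
  have i2 : IntervalIntegrable (fun s => b2 * Real.sin s ^ (2*m+3)) volume 0 π := by
    apply Continuous.intervalIntegrable; fun_prop
  have i3 : IntervalIntegrable (fun s => b3 * Real.sin s ^ (2*m+5)) volume 0 π := by
    apply Continuous.intervalIntegrable; fun_prop
  have i4 : IntervalIntegrable (fun s => b4 * (s * (Real.cos s * Real.sin s ^ (2*m))))
      volume 0 π := by
    apply Continuous.intervalIntegrable; fun_prop
  rw [intervalIntegral.integral_add (((i1.add i2).add i3)) i4,
      intervalIntegral.integral_add (i1.add i2) i3,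
      intervalIntegral.integral_add i1 i2,
      intervalIntegral.integral_const_mul, intervalIntegral.integral_const_mul,
      intervalIntegral.integral_const_mul, intervalIntegral.integral_const_mul]
  rw [aux_parts_lemma m]
  have e1 : (2*m+3) = 2*(m+1)+1 := by ring
  have e2 : (2*m+5) = 2*(m+2)+1 := by ring
  rw [e1, e2, aux_integral_sin_odd m, aux_integral_sin_odd (m+1), aux_integral_sin_odd (m+2)]
  have f2 : (((2*(m+1)+1).factorial : ℕ) : ℝ) = (2*M+3)*(2*M+2)*((2*m+1).factorial : ℝ) := by
    have : 2*(m+1)+1 = (2*m+2)+1 := by ring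
    rw [this, Nat.factorial_succ]
    have : 2*m+2 = (2*m+1)+1 := by ring
    rw [this, Nat.factorial_succ]
    push_cast [M]; ring
  have f3 : (((2*(m+2)+1).factorial : ℕ) : ℝ) =
      (2*M+5)*(2*M+4)*((((2*(m+1)+1).factorial : ℕ)) : ℝ) := by
    have : 2*(m+2)+1 = ((2*(m+1)+1)+1)+1 := by ring
    rw [this, Nat.factorial_succ, Nat.factorial_succ]
    push_cast [M]; ring
  have g1 : (((m+1).factorial : ℕ) : ℝ) = (M+1) * (m.factorial : ℝ) := by
    rw [Nat.factorial_succ]; push_cast [M]; ring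
  have g2 : (((m+2).factorial : ℕ) : ℝ) = (M+2) * (((m+1).factorial : ℕ) : ℝ) := by
    have : m+2 = (m+1)+1 := by ring
    rw [this, Nat.factorial_succ]; push_cast [M]; ring
  have p1 : (4:ℝ) ^ (m+1) = 4 * 4 ^ m := by ring
  have p2 : (4:ℝ) ^ (m+2) = 16 * 4 ^ m := by ring
  have f1 : (((2*(m+1)).factorial : ℕ) : ℝ) = (2*M+2) * ((2*m+1).factorial : ℝ) := by
    have : 2*(m+1) = (2*m+1)+1 := by ring
    rw [this, Nat.factorial_succ]; push_cast [M]; ring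
  have hnc : auxNormC (m+1) = (2*M+3) * (((2*(m+1)).factorial : ℕ) : ℝ) /
      (2 * (4:ℝ)^(m+1) * ((((m+1).factorial : ℕ) : ℝ))^2) := by
    rw [auxNormC]; push_cast [M]; ring
  have hF1 : ((2*m+1).factorial : ℝ) ≠ 0 := Nat.cast_ne_zero.mpr (Nat.factorial_ne_zero _)
  have hFm : ((m.factorial : ℕ) : ℝ) ≠ 0 := Nat.cast_ne_zero.mpr (Nat.factorial_ne_zero _)
  have h4m : (4:ℝ) ^ m ≠ 0 := by positivity
  have hM0 : (0:ℝ) ≤ M := Nat.cast_nonneg m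
  have d1 : (2*M+1) ≠ 0 := by positivity
  have d2 : (2*M+2) ≠ 0 := by positivity
  have d3 : (2*M+3) ≠ 0 := by positivity
  have d4 : (2*M+4) ≠ 0 := by positivity
  have d5 : (2*M+5) ≠ 0 := by positivity
  have dm1 : (M+1) ≠ 0 := by positivity
  have dm2 : (M+2) ≠ 0 := by positivity
  rw [hnc, f3, f2, g2, g1, f1, p1, p2]
  have hMcast : ((m:ℝ)) = M := rfl
  rw [hMcast]
  simp only [b1, b2, b3, b4]
  field_simp
  ring

/-- First-order perturbative approximation of the lowest-lying (`N = 0`) eigenvalues of the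
scalar Laplacian on the Page metric: for integers `n ≥ 1`, `k ≥ 0` and
`μ = (2k+n)(2k+n+2) − n²`,
`μ/4 + n(n+1) + ∫₀^π δV(s) y_{n,n}(s)² ds
  = n² + 3n/2 + kn + k + k² + ν²(2k²(n+2) + 2k(n²+3n+2) − n(n+1))/(2n+3)`. -/
theorem lowest_mode_perturbative_eigenvalue (n k : ℕ) (hn : 1 ≤ n) (ν : ℝ)
    (μ : ℝ) (hμ : μ = (2 * (k : ℝ) + n) * (2 * (k : ℝ) + n + 2) - (n : ℝ) ^ 2) :
    μ / 4 + (n : ℝ) * ((n : ℝ) + 1) +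
        (∫ s in (0 : ℝ)..π, deltaV n ν μ s * (pageY n n s) ^ 2) =
      (n : ℝ) ^ 2 + 3 * (n : ℝ) / 2 + (k : ℝ) * (n : ℝ) + (k : ℝ) + (k : ℝ) ^ 2 +
        ν ^ 2 *
          (2 * (k : ℝ) ^ 2 * ((n : ℝ) + 2) + 2 * (k : ℝ) * ((n : ℝ) ^ 2 + 3 * (n : ℝ) + 2) -
            (n : ℝ) * ((n : ℝ) + 1)) / (2 * (n : ℝ) + 3) := by
  obtain ⟨m, rfl⟩ : ∃ m, n = m + 1 := ⟨n - 1, (Nat.succ_pred_eq_of_pos hn).symm⟩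
  rw [aux_integral_value m ν μ, hμ]
  have hM0 : (0:ℝ) ≤ (m:ℝ) := Nat.cast_nonneg m
  have d5 : (2*(m:ℝ)+5) ≠ 0 := by positivity
  push_cast
  have d5' : (2*((m:ℝ)+1)+3) ≠ 0 := by positivity
  field_simp
  ring
end
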